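/- Let κ ≤ μ be infinite cardinals with κ regular. The poset 𝔹(μ,κ) is (μ+1)-strategically closed: Player II has a winning strategy in the game G_{μ+1}(𝔹(μ,κ)). -/

import Mathlib

noncomputable section

open Cardinal Set

namespace Paper

/-- `C` is a club (closed and unbounded set) in the ordinal `α`. -/
def IsClubIn (C : Set Ordinal) (α : Ordinal) : Prop :=
  C ⊆ Set.Iio α ∧ (∀ γ < α, ∃ β ∈ C, γ ≤ β) ∧
    ∀ γ < α, 0 < γ → sSup (C ∩ Set.Iio γ) = γ → γ ∈ C

/-- `γ` is a limit point of `C`: it belongs to `C` and is the supremum of the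
earlier elements of `C`. -/
def IsLimitPt (γ : Ordinal) (C : Set Ordinal) : Prop :=
  γ ∈ C ∧ sSup (C ∩ Set.Iio γ) = γ

/-- The order type of a set of ordinals. -/
def otp (C : Set Ordinal) : Ordinal.{1} :=
  Ordinal.type (Subrel ((· < ·) : Ordinal → Ordinal → Prop) (· ∈ C))

/-- A condition in the poset `𝔹(mu, kap)`: a sequence `⟨C α : α ∈ s⟩` where
`s` is a bounded subset of `mu⁺` with maximal element `top`, containing all
ordinals below `top` of cofinality `≥ kap`, with each `C α` a club in `α` of
order type `≤ mu`, coherent at limit points. -/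
structure BCond (mu kap : Cardinal.{0}) where
  s : Set Ordinal
  C : Ordinal → Set Ordinal
  top : Ordinal
  top_mem : top ∈ s
  le_top : ∀ α ∈ s, α ≤ top
  lt_succ : ∀ α ∈ s, α < (Order.succ mu).ord
  cof_mem : ∀ α < top, kap ≤ α.cof → α ∈ s
  club : ∀ α ∈ s, IsClubIn (C α) α
  otp_le : ∀ α ∈ s, otp (C α) ≤ Ordinal.lift.{1} mu.ord
  coherent : ∀ β ∈ s, ∀ α < β, IsLimitPt α (C β) → α ∈ s ∧ C β ∩ Set.Iio α = C α

/-- The order on `𝔹(mu, kap)`: `BExt q p` means `q ≤ p`, i.e. `s^q`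
end-extends `s^p` and the clubs agree on `s^p`. -/
def BExt {mu kap : Cardinal.{0}} (q p : BCond mu kap) : Prop :=
  p.s ⊆ q.s ∧ (∀ α ∈ q.s, α ≤ p.top → α ∈ p.s) ∧ ∀ α ∈ p.s, q.C α = p.C α

/-- An even ordinal: of the form `α + 2n` with `α` zero or a limit ordinal.
In particular all limit ordinals and `0` are even. -/
def EvenOrd (ξ : Ordinal) : Prop :=
  ∃ (α : Ordinal) (n : ℕ), (α = 0 ∨ Order.IsSuccLimit α) ∧ ξ = α + 2 * (n : Ordinal)

/-- `σ` is a winning strategy for Player II in the game `G_β` on `(P, le)`: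
`σ` depends only on the play so far, and whenever `0 < ξ < β` is an even stage
and the play so far is a decreasing sequence of conditions in which II has
followed `σ` at all earlier even stages, then `σ` produces a legal move, i.e.
a lower bound for the play so far.  (Stage `0`, where II plays the trivial
top condition `1`, is ignored; this is the standard reading for posets
without a maximum element.) -/
def IsWinningStratII {P : Type*} (le : P → P → Prop) (β : Ordinal)
    (σ : (Ordinal → P) → Ordinal → P) : Prop :=
  (∀ f g ξ, (∀ η < ξ, f η = g η) → σ f ξ = σ g ξ) ∧
  ∀ (f : Ordinal → P) (ξ : Ordinal), 0 < ξ → ξ < β → EvenOrd ξ →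
    (∀ η₁ η₂, 0 < η₁ → η₁ < η₂ → η₂ < ξ → le (f η₂) (f η₁)) →
    (∀ η, 0 < η → η < ξ → EvenOrd η → f η = σ f η) →
    ∀ η, 0 < η → η < ξ → le (σ f ξ) (f η)

/-- `(P, le)` is `β`-strategically closed: Player II has a winning strategy
in the game `G_β(P)`. -/
def StratClosed (P : Type*) (le : P → P → Prop) (β : Ordinal) : Prop :=
  ∃ σ, IsWinningStratII le β σ

/-! ### Auxiliary material -/

section Aux

variable {mu kap : Cardinal.{0}}

lemma BExt_top_le {q p : BCond mu kap} (h : BExt q p) : p.top ≤ q.top :=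
  q.le_top _ (h.1 p.top_mem)

lemma BExt_trans {r q p : BCond mu kap} (h1 : BExt r q) (h2 : BExt q p) : BExt r p :=
  ⟨fun a ha => h1.1 (h2.1 ha),
   fun a ha hle => h2.2.1 a (h1.2.1 a ha (hle.trans (BExt_top_le h2))) hle,
   fun a ha => (h1.2.2 a (h2.1 ha)).trans (h2.2.2 a ha)⟩

lemma top_lt_ord (p : BCond mu kap) : p.top < (Order.succ mu).ord := p.lt_succ _ p.top_mem

/-! ### Parity -/

lemma evenOrd_two : EvenOrd 2 := ⟨0, 1, Or.inl rfl, by simp⟩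

lemma EvenOrd.add_two {η : Ordinal} (h : EvenOrd η) : EvenOrd (η + 2) := by
  obtain ⟨α, n, h1, rfl⟩ := h
  refine ⟨α, n + 1, h1, ?_⟩
  rw [Nat.cast_add, Nat.cast_one, mul_add, mul_one, ← add_assoc]

lemma EvenOrd.of_isLimit {η : Ordinal} (h : Order.IsSuccLimit η) : EvenOrd η :=
  ⟨η, 0, Or.inr h, by simp⟩

lemma exists_limit_decomp (o : Ordinal) :
    ∃ (α : Ordinal) (n : ℕ), (α = 0 ∨ Order.IsSuccLimit α) ∧ o = α + n := by
  induction o using Ordinal.limitRecOn with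
  | zero => exact ⟨0, 0, Or.inl rfl, by simp⟩
  | add_one o ih =>
      obtain ⟨α, n, h1, rfl⟩ := ih
      exact ⟨α, n + 1, h1, by
        rw [Nat.cast_add, Nat.cast_one, ← add_assoc, Ordinal.add_one_eq_succ]⟩
  | limit o ho _ => exact ⟨o, 0, Or.inr ho, by simp⟩

lemma evenOrd_or_succ (o : Ordinal) : EvenOrd o ∨ EvenOrd (o + 1) := by
  obtain ⟨α, n, h1, rfl⟩ := exists_limit_decomp o
  rcases Nat.even_or_odd n with ⟨m, rfl⟩ | ⟨m, rfl⟩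
  · refine Or.inl ⟨α, m, h1, ?_⟩
    rw [show m + m = 2 * m from (two_mul m).symm, Ordinal.natCast_mul]
    norm_num
  · refine Or.inr ⟨α, m + 1, h1, ?_⟩
    rw [add_assoc]
    congr 1
    rw [Nat.cast_add, Nat.cast_one, Ordinal.natCast_mul, Nat.cast_add, Nat.cast_one,
      mul_add, mul_one, add_assoc, one_add_one_eq_two]
    norm_num

lemma EvenOrd.two_le {η : Ordinal} (h : EvenOrd η) (h0 : η ≠ 0) : 2 ≤ η := by
  obtain ⟨α, n, h1, rfl⟩ := h
  rcases h1 with rfl | hl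
  · rw [zero_add] at h0 ⊢
    have hn : 1 ≤ n := by
      rcases Nat.eq_zero_or_pos n with rfl | h
      · simp at h0
      · exact h
    calc (2 : Ordinal) = 2 * 1 := by rw [mul_one]
    _ ≤ 2 * (n : Ordinal) := by
        apply mul_le_mul_right
        exact_mod_cast hn
  · have h2 : (2 : Ordinal) < α :=
      calc (2 : Ordinal) < Ordinal.omega0 := by exact_mod_cast Ordinal.nat_lt_omega0 2
      _ ≤ α := Ordinal.omega0_le_of_isSuccLimit hl
    exact h2.le.trans (le_self_add)

lemma EvenOrd.succ_or_limit {η : Ordinal} (h : EvenOrd η) (h0 : η ≠ 0) :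
    Order.IsSuccLimit η ∨ ∃ ζ, η = ζ + 2 := by
  obtain ⟨α, n, h1, rfl⟩ := h
  cases n with
  | zero =>
      simp only [Nat.cast_zero, mul_zero, add_zero] at h0 ⊢
      rcases h1 with rfl | hl
      · exact absurd rfl h0
      · exact Or.inl hl
  | succ m =>
      refine Or.inr ⟨α + 2 * (m : Ordinal), ?_⟩
      rw [add_assoc]
      congr 1
      rw [Nat.cast_add, Nat.cast_one, mul_add, mul_one]

lemma add_two_eq (η : Ordinal) : η + 2 = Order.succ (Order.succ η) := by
  rw [← Ordinal.add_one_eq_succ, ← Ordinal.add_one_eq_succ, add_assoc, one_add_one_eq_two]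

lemma lt_add_two (η : Ordinal) : η < η + 2 := by
  rw [add_two_eq]
  exact (Order.lt_succ _).trans (Order.lt_succ _)

lemma add_two_lt {ξ η : Ordinal} (hξ : Order.IsSuccLimit ξ) (h : η < ξ) : η + 2 < ξ := by
  rw [add_two_eq, ← Ordinal.add_one_eq_succ, ← Ordinal.add_one_eq_succ]
  exact hξ.succ_lt (hξ.succ_lt h)

lemma add_one_lt_add_two (ζ : Ordinal) : ζ + 1 < ζ + 2 := by
  rw [add_two_eq, Ordinal.add_one_eq_succ]
  exact Order.lt_succ _

lemma two_lt_of_limit {ξ : Ordinal} (hξ : Order.IsSuccLimit ξ) : 2 < ξ := by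
  calc (2 : Ordinal) < Ordinal.omega0 := by exact_mod_cast Ordinal.nat_lt_omega0 2
  _ ≤ ξ := Ordinal.omega0_le_of_isSuccLimit hξ


/-! ### Plays -/

def topsSet (f : Ordinal → BCond mu kap) (ξ : Ordinal) : Set Ordinal :=
  {x | ∃ η, 0 < η ∧ η < ξ ∧ EvenOrd η ∧ (f η).top = x}

def Decr (f : Ordinal → BCond mu kap) (ξ : Ordinal) : Prop :=
  ∀ η₁ η₂, 0 < η₁ → η₁ < η₂ → η₂ < ξ → BExt (f η₂) (f η₁)

def GoodPlay (f : Ordinal → BCond mu kap) (ξ : Ordinal) : Prop :=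
  Decr f ξ ∧
  (∀ ζ, ζ + 2 < ξ → EvenOrd (ζ + 2) → (f (ζ + 2)).top = (f (ζ + 1)).top + 1) ∧
  (∀ η, 0 < η → η < ξ → Order.IsSuccLimit η →
    (f η).top = sSup (topsSet f η) ∧ (f η).C ((f η).top) = topsSet f η)

lemma topsSet_bddAbove (f : Ordinal → BCond mu kap) (ξ : Ordinal) :
    BddAbove (topsSet f ξ) := by
  refine ⟨(Order.succ mu).ord, ?_⟩
  rintro x ⟨η, -, -, -, rfl⟩
  exact (top_lt_ord _).le

lemma topsSet_congr {f g : Ordinal → BCond mu kap} {ξ : Ordinal}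
    (h : ∀ η < ξ, f η = g η) : topsSet f ξ = topsSet g ξ := by
  ext x
  constructor
  · rintro ⟨η, h0, hη, he, rfl⟩
    exact ⟨η, h0, hη, he, by rw [h η hη]⟩
  · rintro ⟨η, h0, hη, he, rfl⟩
    exact ⟨η, h0, hη, he, by rw [h η hη]⟩

lemma goodPlay_congr {f g : Ordinal → BCond mu kap} {ξ : Ordinal}
    (h : ∀ η < ξ, f η = g η) (hg : GoodPlay f ξ) : GoodPlay g ξ := by
  obtain ⟨hd, ha, hb⟩ := hg
  refine ⟨fun η₁ η₂ h0 h12 h2 => ?_, fun ζ hζ he => ?_, fun η h0 hη hl => ?_⟩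
  · rw [← h η₁ (h12.trans h2), ← h η₂ h2]
    exact hd _ _ h0 h12 h2
  · rw [← h _ hζ, ← h (ζ + 1) ((add_one_lt_add_two ζ).trans hζ)]
    exact ha ζ hζ he
  · rw [← h η hη, ← topsSet_congr (fun ζ hζ => h ζ (hζ.trans hη))]
    exact hb η h0 hη hl

lemma Decr.top_mono {f : Ordinal → BCond mu kap} {ξ : Ordinal} (hd : Decr f ξ)
    {η₁ η₂ : Ordinal} (h0 : 0 < η₁) (h12 : η₁ ≤ η₂) (h2 : η₂ < ξ) :
    (f η₁).top ≤ (f η₂).top := by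
  rcases h12.lt_or_eq with h | rfl
  · exact BExt_top_le (hd _ _ h0 h h2)
  · exact le_rfl

lemma GoodPlay.top_lt {f : Ordinal → BCond mu kap} {ξ : Ordinal} (hg : GoodPlay f ξ)
    {η₁ η₂ : Ordinal} (h0 : 0 < η₁) (he₁ : EvenOrd η₁) (h12 : η₁ < η₂) (h2 : η₂ < ξ)
    (he₂ : EvenOrd η₂) : (f η₁).top < (f η₂).top := by
  rcases he₂.succ_or_limit (h0.trans h12).ne' with hl | ⟨ζ, rfl⟩
  · have h1₂ : η₁ + 2 < η₂ := add_two_lt hl h12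
    have hmem : (f (η₁ + 2)).top ∈ topsSet f η₂ :=
      ⟨η₁ + 2, h0.trans (lt_add_two η₁), h1₂, he₁.add_two, rfl⟩
    have hlt : (f η₁).top < (f (η₁ + 2)).top := by
      rw [hg.2.1 η₁ (h1₂.trans h2) he₁.add_two]
      have hle : (f η₁).top ≤ (f (η₁ + 1)).top := by
        apply hg.1.top_mono h0 (le_self_add)
        exact (add_one_lt_add_two η₁).trans (h1₂.trans h2)
      calc (f η₁).top ≤ (f (η₁ + 1)).top := hle
      _ < (f (η₁ + 1)).top + 1 := by
          rw [Ordinal.add_one_eq_succ]; exact Order.lt_succ _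
    rw [(hg.2.2 η₂ (h0.trans h12) h2 hl).1]
    exact hlt.trans_le (le_csSup (topsSet_bddAbove f η₂) hmem)
  · rw [hg.2.1 ζ h2 he₂]
    have hle : η₁ ≤ ζ + 1 := by
      rw [add_two_eq] at h12
      exact Order.lt_succ_iff.1 ((Order.lt_succ_iff.1 h12).trans_lt (Order.lt_succ _))
    calc (f η₁).top ≤ (f (ζ + 1)).top := by
          apply hg.1.top_mono h0 hle
          exact (add_one_lt_add_two ζ).trans h2
    _ < (f (ζ + 1)).top + 1 := by
        rw [Ordinal.add_one_eq_succ]; exact Order.lt_succ _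

lemma GoodPlay.pos_of_mem_tops {f : Ordinal → BCond mu kap} {ξ : Ordinal}
    (hg : GoodPlay f ξ) (hξ : Order.IsSuccLimit ξ) {x : Ordinal} (hx : x ∈ topsSet f ξ) : 0 < x := by
  obtain ⟨η, h0, hη, he, rfl⟩ := hx
  have h2ξ : (2 : Ordinal) < ξ := two_lt_of_limit hξ
  have h2 : (f 2).top = (f 1).top + 1 := by
    have := hg.2.1 0 (by rw [zero_add]; exact h2ξ) (by rw [zero_add]; exact evenOrd_two)
    rwa [zero_add, zero_add] at this
  have hpos2 : 0 < (f 2).top := by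
    rw [h2, Ordinal.add_one_eq_succ]
    exact (zero_le).trans_lt (Order.lt_succ _)
  rcases (he.two_le h0.ne').lt_or_eq with h | h
  · exact hpos2.trans (hg.top_lt zero_lt_two evenOrd_two h hη he)
  · rw [← h]; exact hpos2

lemma GoodPlay.topsSet_inter {f : Ordinal → BCond mu kap} {ξ : Ordinal} (hg : GoodPlay f ξ)
    {η : Ordinal} (h0 : 0 < η) (hη : η < ξ) (he : EvenOrd η) :
    topsSet f ξ ∩ Set.Iio ((f η).top) = topsSet f η := by
  ext x
  constructor
  · rintro ⟨⟨ζ, hζ0, hζξ, hζe, rfl⟩, hx⟩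
    have hζη : ζ < η := by
      by_contra hc
      push_neg at hc
      exact absurd (hg.1.top_mono h0 hc hζξ) (not_le.2 hx)
    exact ⟨ζ, hζ0, hζη, hζe, rfl⟩
  · rintro ⟨ζ, hζ0, hζη, hζe, rfl⟩
    exact ⟨⟨ζ, hζ0, hζη.trans hη, hζe, rfl⟩, hg.top_lt hζ0 hζe hζη hη he⟩

lemma GoodPlay.key {f : Ordinal → BCond mu kap} {ξ : Ordinal} (hg : GoodPlay f ξ)
    (hξ : Order.IsSuccLimit ξ) {δ : Ordinal} (h0 : 0 < δ) (hδ : δ < sSup (topsSet f ξ))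
    (hsup : sSup (topsSet f ξ ∩ Set.Iio δ) = δ) :
    ∃ η, 0 < η ∧ η < ξ ∧ Order.IsSuccLimit η ∧ (f η).top = δ ∧
      topsSet f η = topsSet f ξ ∩ Set.Iio δ := by
  set A : Set Ordinal := {η | 0 < η ∧ η < ξ ∧ EvenOrd η ∧ (f η).top < δ} with hA
  have hTne : (topsSet f ξ ∩ Set.Iio δ).Nonempty := by
    by_contra h
    rw [not_nonempty_iff_eq_empty] at h
    rw [h, csSup_empty] at hsup
    exact h0.ne' (hsup.symm.trans (Ordinal.bot_eq_zero))
  have hAne : A.Nonempty := by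
    obtain ⟨x, ⟨η, h1, h2, h3, rfl⟩, hx⟩ := hTne
    exact ⟨η, h1, h2, h3, hx⟩
  have hAbdd : BddAbove A := ⟨ξ, fun η hη => hη.2.1.le⟩
  set ηs := sSup A with hηs
  have hηs_pos : 0 < ηs := by
    obtain ⟨η, hη⟩ := hAne
    exact hη.1.trans_le (le_csSup hAbdd hη)
  have hηs_le : ηs ≤ ξ := csSup_le hAne fun η hη => hη.2.1.le
  have hnotmem : ηs ∉ A := by
    intro hmem
    have hb : ∀ x ∈ topsSet f ξ ∩ Set.Iio δ, x ≤ (f ηs).top := by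
      rintro x ⟨⟨ζ, hζ0, hζξ, hζe, rfl⟩, hx⟩
      exact hg.1.top_mono hζ0 (le_csSup hAbdd ⟨hζ0, hζξ, hζe, hx⟩) hmem.2.1
    have := csSup_le hTne hb
    rw [hsup] at this
    exact absurd this (not_le.2 hmem.2.2.2)
  have hgt : ∀ ζ < ηs, ∃ η ∈ A, ζ < η := by
    intro ζ hζ
    by_contra hc
    push_neg at hc
    exact absurd (csSup_le hAne hc) (not_le.2 hζ)
  have hne_ξ : ηs ≠ ξ := by
    intro h
    have hub : ∀ x ∈ topsSet f ξ, x ≤ δ := by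
      rintro x ⟨ζ, hζ0, hζξ, hζe, rfl⟩
      obtain ⟨η, hη, hζη⟩ := hgt ζ (h ▸ hζξ)
      exact ((hg.top_lt hζ0 hζe hζη hη.2.1 hη.2.2.1).trans hη.2.2.2).le
    have hTne' : (topsSet f ξ).Nonempty := by
      obtain ⟨η, hη⟩ := hAne
      exact ⟨(f η).top, η, hη.1, hη.2.1, hη.2.2.1, rfl⟩
    exact absurd (csSup_le hTne' hub) (not_le.2 hδ)
  have hηs_lt : ηs < ξ := hηs_le.lt_of_ne hne_ξ
  have hηs_lim : Order.IsSuccLimit ηs := by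
    rcases Ordinal.zero_or_succ_or_isSuccLimit ηs with h | ⟨β, hβ⟩ | h
    · exact absurd h hηs_pos.ne'
    · exfalso
      obtain ⟨η, hη, hβη⟩ := hgt β (hβ ▸ Order.lt_succ β)
      have heq : η = ηs :=
        le_antisymm (le_csSup hAbdd hη) (hβ ▸ Order.succ_le_of_lt hβη)
      exact hnotmem (heq ▸ hη)
    · exact h
  have hset : topsSet f ηs = topsSet f ξ ∩ Set.Iio δ := by
    ext x
    constructor
    · rintro ⟨ζ, hζ0, hζηs, hζe, rfl⟩
      obtain ⟨η, hη, hζη⟩ := hgt ζ hζηs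
      exact ⟨⟨ζ, hζ0, hζηs.trans hηs_lt, hζe, rfl⟩,
        (hg.top_lt hζ0 hζe hζη hη.2.1 hη.2.2.1).trans hη.2.2.2⟩
    · rintro ⟨⟨ζ, hζ0, hζξ, hζe, rfl⟩, hx⟩
      have hζA : ζ ∈ A := ⟨hζ0, hζξ, hζe, hx⟩
      have hζηs : ζ < ηs :=
        (le_csSup hAbdd hζA).lt_of_ne fun h => hnotmem (by rw [hηs, ← h]; exact hζA)
      exact ⟨ζ, hζ0, hζηs, hζe, rfl⟩
  have htop : (f ηs).top = δ := by
    rw [(hg.2.2 ηs hηs_pos hηs_lt hηs_lim).1, hset, hsup]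
  exact ⟨ηs, hηs_pos, hηs_lt, hηs_lim, htop, hset⟩


/-! ### Cardinality and order-type bounds -/

lemma ord_succ_pos (hmu : ℵ₀ ≤ mu) : 0 < (Order.succ mu).ord := by
  have h1 : (ℵ₀ : Cardinal).ord ≤ (Order.succ mu).ord :=
    Cardinal.ord_le_ord.2 (hmu.trans (Order.le_succ mu))
  rw [Cardinal.ord_aleph0] at h1
  exact Ordinal.omega0_pos.trans_le h1

lemma sSup_topsSet_lt (hmu : ℵ₀ ≤ mu) {f : Ordinal → BCond mu kap} {ξ : Ordinal}
    (hξμ : ξ ≤ mu.ord) : sSup (topsSet f ξ) < (Order.succ mu).ord := by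
  classical
  haveI : IsWellOrder ξ.ToType (· < ·) := isWellOrder_lt
  have hreg : (Order.succ mu).IsRegular := Cardinal.isRegular_succ hmu
  set tv : Ordinal → Ordinal := fun η => if 0 < η ∧ EvenOrd η then (f η).top else 0
    with htv
  set g : ξ.ToType → Ordinal :=
    fun x => tv (Ordinal.typein ((· < ·) : ξ.ToType → ξ.ToType → Prop) x) with hgdef
  have htvlt : ∀ η, tv η < (Order.succ mu).ord := by
    intro η
    rw [htv]
    beta_reduce
    split
    · exact top_lt_ord _
    · exact ord_succ_pos hmu
  have hglt : ∀ x, g x < (Order.succ mu).ord := fun x => htvlt _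
  have hsup_le : sSup (topsSet f ξ) ≤ iSup g := by
    apply csSup_le'
    rintro x ⟨η, h0, hη, he, rfl⟩
    have hηtype : η < Ordinal.type ((· < ·) : ξ.ToType → ξ.ToType → Prop) := by
      rw [Ordinal.type_toType]; exact hη
    obtain ⟨y, hy⟩ := Ordinal.typein_surj _ hηtype
    have hgy : g y = (f η).top := by
      rw [hgdef]
      beta_reduce
      rw [hy, htv]
      beta_reduce
      rw [if_pos ⟨h0, he⟩]
    rw [← hgy]
    exact le_ciSup (Ordinal.bddAbove_range g) y
  refine hsup_le.trans_lt (Ordinal.iSup_lt_ord ?_ hglt)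
  rw [Cardinal.mk_toType, hreg.cof_eq]
  exact ((Ordinal.card_le_card hξμ).trans_eq (Cardinal.card_ord mu)).trans_lt
    (Order.lt_succ mu)

lemma otp_empty : otp (∅ : Set Ordinal) = 0 :=
  Ordinal.type_eq_zero_of_empty _

lemma otp_singleton (x : Ordinal) : otp ({x} : Set Ordinal) = 1 :=
  Ordinal.type_eq_one_of_unique _

lemma one_le_lift_ord (hmu : ℵ₀ ≤ mu) : 1 ≤ Ordinal.lift.{1} mu.ord := by
  have h1 : (1 : Ordinal) ≤ mu.ord := by
    have h2 : (ℵ₀ : Cardinal).ord ≤ mu.ord := Cardinal.ord_le_ord.2 hmu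
    rw [Cardinal.ord_aleph0] at h2
    exact (Ordinal.one_lt_omega0.le).trans h2
  calc (1 : Ordinal.{1}) = Ordinal.lift.{1} 1 := (Ordinal.lift_one).symm
  _ ≤ Ordinal.lift.{1} mu.ord := Ordinal.lift_le.2 h1

lemma otp_topsSet_le {f : Ordinal → BCond mu kap} {ξ : Ordinal}
    (hg : GoodPlay f ξ) (hξμ : ξ ≤ mu.ord) :
    otp (topsSet f ξ) ≤ Ordinal.lift.{1} mu.ord := by
  classical
  set T := topsSet f ξ with hT
  have hth : ∀ t : T, ∃ η, 0 < η ∧ η < ξ ∧ EvenOrd η ∧ (f η).top = (t : Ordinal) :=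
    fun t => t.2
  choose st h1 h2 h3 h4 using hth
  have hmain : ∀ a b : T, (a : Ordinal) < (b : Ordinal) → st a < st b := by
    intro a b hab
    by_contra hc
    push_neg at hc
    have := hg.1.top_mono (h1 b) hc (h2 a)
    rw [h4 a, h4 b] at this
    exact absurd hab (not_lt.2 this)
  let F : Subrel ((· < ·) : Ordinal → Ordinal → Prop) (· ∈ T) ↪r
      Subrel ((· < ·) : Ordinal → Ordinal → Prop) (· ∈ {o : Ordinal | o < mu.ord}) :=
    RelEmbedding.ofMonotone (fun a => ⟨st a, (h2 a).trans_le hξμ⟩)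
      (fun a b hab => hmain a b hab)
  have hle := F.ordinal_type_le
  exact hle.trans_eq (Ordinal.type_lt_Iio mu.ord)

/-! ### The trivial condition -/

def trivCond (hmu : ℵ₀ ≤ mu) : BCond mu kap where
  s := {0}
  C := fun _ => ∅
  top := 0
  top_mem := rfl
  le_top := by rintro α hα; rw [mem_singleton_iff] at hα; exact hα.le
  lt_succ := by
    rintro α hα; rw [mem_singleton_iff] at hα; rw [hα]; exact ord_succ_pos hmu
  cof_mem := fun α h _ => absurd h (not_lt_zero (a := α))
  club := by
    rintro α hα; rw [mem_singleton_iff] at hα; subst hα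
    exact ⟨empty_subset _, fun γ hγ => absurd hγ (not_lt_zero (a := γ)),
      fun γ hγ => absurd hγ (not_lt_zero (a := γ))⟩
  otp_le := by
    intro α _
    rw [otp_empty]
    exact zero_le
  coherent := by
    rintro β hβ α hα
    rw [mem_singleton_iff] at hβ
    subst hβ
    exact absurd hα (not_lt_zero (a := α))

/-! ### The successor step -/

lemma top_lt_top_add_one (p : BCond mu kap) : p.top < p.top + 1 := by
  rw [Ordinal.add_one_eq_succ]; exact Order.lt_succ _

def succExt (hmu : ℵ₀ ≤ mu) (p : BCond mu kap) : BCond mu kap where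
  s := insert (p.top + 1) p.s
  C := fun α => if α = p.top + 1 then {p.top} else p.C α
  top := p.top + 1
  top_mem := mem_insert _ _
  le_top := by
    rintro α (rfl | hα)
    · exact le_rfl
    · exact (p.le_top α hα).trans (top_lt_top_add_one p).le
  lt_succ := by
    rintro α (rfl | hα)
    · have hlim : Order.IsSuccLimit (Order.succ mu).ord :=
        Cardinal.isSuccLimit_ord (hmu.trans (Order.le_succ mu))
      rw [Ordinal.add_one_eq_succ, ← Ordinal.add_one_eq_succ]
      exact hlim.succ_lt (top_lt_ord p)
    · exact p.lt_succ α hα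
  cof_mem := by
    intro α hα hcof
    have hle : α ≤ p.top := by
      rw [Ordinal.add_one_eq_succ] at hα
      exact Order.lt_succ_iff.1 hα
    rcases hle.lt_or_eq with h | rfl
    · exact mem_insert_of_mem _ (p.cof_mem α h hcof)
    · exact mem_insert_of_mem _ p.top_mem
  club := by
    rintro α (rfl | hα) <;> beta_reduce
    · rw [if_pos rfl]
      refine ⟨?_, ?_, ?_⟩
      · rintro x hx
        rw [mem_singleton_iff] at hx
        rw [hx]
        exact top_lt_top_add_one p
      · intro γ hγ
        refine ⟨p.top, rfl, ?_⟩
        rw [Ordinal.add_one_eq_succ] at hγ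
        exact Order.lt_succ_iff.1 hγ
      · intro γ hγ h0 hs
        exfalso
        have hemp : ({p.top} : Set Ordinal) ∩ Set.Iio γ = ∅ := by
          ext x
          simp only [mem_inter_iff, mem_singleton_iff, mem_Iio, mem_empty_iff_false,
            iff_false, not_and]
          rintro rfl
          rw [Ordinal.add_one_eq_succ] at hγ
          exact not_lt.2 (Order.lt_succ_iff.1 hγ)
        rw [hemp, csSup_empty] at hs
        exact h0.ne' (hs.symm.trans Ordinal.bot_eq_zero)
    · have hne : α ≠ p.top + 1 := ((p.le_top α hα).trans_lt (top_lt_top_add_one p)).ne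
      rw [if_neg hne]
      exact p.club α hα
  otp_le := by
    rintro α (rfl | hα) <;> beta_reduce
    · rw [if_pos rfl, otp_singleton]
      exact one_le_lift_ord hmu
    · have hne : α ≠ p.top + 1 := ((p.le_top α hα).trans_lt (top_lt_top_add_one p)).ne
      rw [if_neg hne]
      exact p.otp_le α hα
  coherent := by
    rintro β (rfl | hβ) α hα hpt <;> beta_reduce at hpt ⊢
    · rw [if_pos rfl] at hpt
      obtain ⟨h1, h2⟩ := hpt
      rw [mem_singleton_iff] at h1
      subst h1
      have hemp : ({p.top} : Set Ordinal) ∩ Set.Iio p.top = ∅ := by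
        ext x
        simp only [mem_inter_iff, mem_singleton_iff, mem_Iio, mem_empty_iff_false,
          iff_false, not_and]
        rintro rfl
        exact lt_irrefl _
      rw [hemp, csSup_empty] at h2
      have hp0 : p.top = 0 := h2.symm.trans Ordinal.bot_eq_zero
      constructor
      · exact mem_insert_of_mem _ (hp0 ▸ p.top_mem)
      · have hne : p.top ≠ p.top + 1 := (top_lt_top_add_one p).ne
        rw [if_pos rfl, if_neg hne, hemp]
        symm
        rw [eq_empty_iff_forall_notMem]
        intro x hx
        have := (p.club p.top p.top_mem).1 hx
        rw [hp0] at this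
        exact absurd this (not_lt_zero (a := x))
    · have hβne : β ≠ p.top + 1 := ((p.le_top β hβ).trans_lt (top_lt_top_add_one p)).ne
      rw [if_neg hβne] at hpt
      obtain ⟨hαs, hC⟩ := p.coherent β hβ α hα hpt
      have hαne : α ≠ p.top + 1 := ((p.le_top α hαs).trans_lt (top_lt_top_add_one p)).ne
      exact ⟨mem_insert_of_mem _ hαs, by rw [if_neg hβne, if_neg hαne, hC]⟩

lemma succExt_BExt (hmu : ℵ₀ ≤ mu) (p : BCond mu kap) : BExt (succExt hmu p) p := by
  refine ⟨subset_insert _ _, ?_, ?_⟩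
  · rintro α (rfl | hα) hle
    · exact absurd hle (not_le.2 (top_lt_top_add_one p))
    · exact hα
  · intro α hα
    have hne : α ≠ p.top + 1 := ((p.le_top α hα).trans_lt (top_lt_top_add_one p)).ne
    exact if_neg hne

lemma succExt_top (hmu : ℵ₀ ≤ mu) (p : BCond mu kap) :
    (succExt hmu p).top = p.top + 1 := rfl


/-! ### The limit step -/

def Uset (f : Ordinal → BCond mu kap) (ξ : Ordinal) : Set Ordinal :=
  {α | ∃ η, 0 < η ∧ η < ξ ∧ α ∈ (f η).s}

def Cold (f : Ordinal → BCond mu kap) (ξ : Ordinal) : Ordinal → Set Ordinal :=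
  fun α => ⋃₀ {D | ∃ η, 0 < η ∧ η < ξ ∧ α ∈ (f η).s ∧ D = (f η).C α}

lemma mem_s_mono {f : Ordinal → BCond mu kap} {ξ : Ordinal} (hd : Decr f ξ)
    {η η' : Ordinal} (h0 : 0 < η) (hle : η ≤ η') (hη' : η' < ξ) :
    (f η).s ⊆ (f η').s := by
  rcases hle.lt_or_eq with h | rfl
  · exact (hd η η' h0 h hη').1
  · exact subset_rfl

lemma C_agree {f : Ordinal → BCond mu kap} {ξ : Ordinal} (hd : Decr f ξ)
    {η η' : Ordinal} (h0 : 0 < η) (h0' : 0 < η') (hη : η < ξ) (hη' : η' < ξ)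
    {α : Ordinal} (hα : α ∈ (f η).s) (hα' : α ∈ (f η').s) :
    (f η').C α = (f η).C α := by
  rcases lt_trichotomy η η' with h | rfl | h
  · exact (hd η η' h0 h hη').2.2 α hα
  · rfl
  · exact ((hd η' η h0' h hη).2.2 α hα').symm

lemma Cold_eq {f : Ordinal → BCond mu kap} {ξ : Ordinal} (hd : Decr f ξ)
    {η α : Ordinal} (h0 : 0 < η) (hη : η < ξ) (hα : α ∈ (f η).s) :
    Cold f ξ α = (f η).C α := by
  apply subset_antisymm
  · rintro x ⟨D, ⟨η', h0', hη', hα', rfl⟩, hx⟩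
    rwa [C_agree hd h0 h0' hη hη' hα hα'] at hx
  · intro x hx
    exact ⟨(f η).C α, ⟨η, h0, hη, hα, rfl⟩, hx⟩

section LimitExt

lemma topsSet_nonempty (f : Ordinal → BCond mu kap) {ξ : Ordinal} (hξ : Order.IsSuccLimit ξ) :
    (topsSet f ξ).Nonempty :=
  ⟨(f 2).top, 2, zero_lt_two, two_lt_of_limit hξ, evenOrd_two, rfl⟩

lemma top_lt_sSup {f : Ordinal → BCond mu kap} {ξ : Ordinal}
    (hξ : Order.IsSuccLimit ξ) (hg : GoodPlay f ξ) {η : Ordinal}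
    (h0 : 0 < η) (hη : η < ξ) : (f η).top < sSup (topsSet f ξ) := by
  obtain ⟨η', hle, hη'ξ, he'⟩ : ∃ η', η ≤ η' ∧ η' < ξ ∧ EvenOrd η' := by
    rcases evenOrd_or_succ η with he | he
    · exact ⟨η, le_rfl, hη, he⟩
    · refine ⟨η + 1, ?_, ?_, he⟩
      · rw [Ordinal.add_one_eq_succ]; exact (Order.lt_succ _).le
      · rw [Ordinal.add_one_eq_succ]; exact hξ.succ_lt hη
  calc (f η).top ≤ (f η').top := hg.1.top_mono h0 hle hη'ξ
  _ < (f (η' + 2)).top :=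
      hg.top_lt (h0.trans_le hle) he' (lt_add_two η') (add_two_lt hξ hη'ξ) he'.add_two
  _ ≤ sSup (topsSet f ξ) :=
      le_csSup (topsSet_bddAbove f ξ)
        ⟨η' + 2, (h0.trans_le hle).trans (lt_add_two η'), add_two_lt hξ hη'ξ,
          he'.add_two, rfl⟩

variable {f : Ordinal → BCond mu kap} {ξ : Ordinal} in
lemma U_lt (hξ : Order.IsSuccLimit ξ) (hg : GoodPlay f ξ) {α : Ordinal} (hα : α ∈ Uset f ξ) :
    α < sSup (topsSet f ξ) := by
  obtain ⟨η, h0, hη, hs⟩ := hα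
  exact ((f η).le_top α hs).trans_lt (top_lt_sSup hξ hg h0 hη)

def limitExt (hmu : ℵ₀ ≤ mu) (f : Ordinal → BCond mu kap) (ξ : Ordinal)
    (hξ : Order.IsSuccLimit ξ) (hξμ : ξ ≤ mu.ord) (hg : GoodPlay f ξ) : BCond mu kap where
  s := insert (sSup (topsSet f ξ)) (Uset f ξ)
  C := fun α => if α = sSup (topsSet f ξ) then topsSet f ξ else Cold f ξ α
  top := sSup (topsSet f ξ)
  top_mem := mem_insert _ _
  le_top := by
    rintro α (rfl | hα)
    · exact le_rfl
    · exact (U_lt hξ hg hα).le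
  lt_succ := by
    rintro α (rfl | hα)
    · exact sSup_topsSet_lt hmu hξμ
    · obtain ⟨η, h0, hη, hs⟩ := hα
      exact (f η).lt_succ α hs
  cof_mem := by
    intro α hα hcof
    obtain ⟨x, ⟨η, h0, hη, he, rfl⟩, hαx⟩ :=
      (lt_csSup_iff (topsSet_bddAbove f ξ) (topsSet_nonempty f hξ)).1 hα
    exact mem_insert_of_mem _ ⟨η, h0, hη, (f η).cof_mem α hαx hcof⟩
  club := by
    rintro α (rfl | hα) <;> beta_reduce
    · rw [if_pos rfl]
      refine ⟨?_, ?_, ?_⟩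
      · rintro x ⟨η, h0, hη, he, rfl⟩
        exact top_lt_sSup hξ hg h0 hη
      · intro γ hγ
        obtain ⟨x, hx, hlt⟩ :=
          (lt_csSup_iff (topsSet_bddAbove f ξ) (topsSet_nonempty f hξ)).1 hγ
        exact ⟨x, hx, hlt.le⟩
      · intro γ hγ h0 hs
        obtain ⟨η, hη0, hηξ, hηlim, htop, -⟩ := hg.key hξ h0 hγ hs
        exact ⟨η, hη0, hηξ, EvenOrd.of_isLimit hηlim, htop⟩
    · have hne : α ≠ sSup (topsSet f ξ) := (U_lt hξ hg hα).ne
      rw [if_neg hne]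
      obtain ⟨η, h0, hη, hs⟩ := hα
      rw [Cold_eq hg.1 h0 hη hs]
      exact (f η).club α hs
  otp_le := by
    rintro α (rfl | hα) <;> beta_reduce
    · rw [if_pos rfl]
      exact otp_topsSet_le hg hξμ
    · have hne : α ≠ sSup (topsSet f ξ) := (U_lt hξ hg hα).ne
      rw [if_neg hne]
      obtain ⟨η, h0, hη, hs⟩ := hα
      rw [Cold_eq hg.1 h0 hη hs]
      exact (f η).otp_le α hs
  coherent := by
    rintro β (rfl | hβ) α hα hpt <;> beta_reduce at hpt ⊢
    · rw [if_pos rfl] at hpt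
      obtain ⟨hmem, hsup⟩ := hpt
      have hαpos : 0 < α := hg.pos_of_mem_tops hξ hmem
      obtain ⟨η, h0, hη, hlim, htop, hset⟩ := hg.key hξ hαpos hα hsup
      have hαs : α ∈ (f η).s := htop ▸ (f η).top_mem
      constructor
      · exact mem_insert_of_mem _ ⟨η, h0, hη, hαs⟩
      · rw [if_pos rfl, if_neg hα.ne, Cold_eq hg.1 h0 hη hαs]
        have hCα : (f η).C α = topsSet f η := by
          rw [← htop]
          exact (hg.2.2 η h0 hη hlim).2
        rw [hCα, hset]
    · have hβne : β ≠ sSup (topsSet f ξ) := (U_lt hξ hg hβ).ne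
      rw [if_neg hβne] at hpt
      obtain ⟨η, h0, hη, hs⟩ := hβ
      rw [Cold_eq hg.1 h0 hη hs] at hpt
      obtain ⟨hαs, hC⟩ := (f η).coherent β hs α hα hpt
      have hαU : α ∈ Uset f ξ := ⟨η, h0, hη, hαs⟩
      refine ⟨mem_insert_of_mem _ hαU, ?_⟩
      rw [if_neg hβne, if_neg (U_lt hξ hg hαU).ne, Cold_eq hg.1 h0 hη hs,
        Cold_eq hg.1 h0 hη hαs, hC]

variable {mu' kap' : Cardinal.{0}}

lemma limitExt_top (hmu : ℵ₀ ≤ mu) (f : Ordinal → BCond mu kap) (ξ : Ordinal)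
    (hξ : Order.IsSuccLimit ξ) (hξμ : ξ ≤ mu.ord) (hg : GoodPlay f ξ) :
    (limitExt hmu f ξ hξ hξμ hg).top = sSup (topsSet f ξ) := rfl

lemma limitExt_C_top (hmu : ℵ₀ ≤ mu) (f : Ordinal → BCond mu kap) (ξ : Ordinal)
    (hξ : Order.IsSuccLimit ξ) (hξμ : ξ ≤ mu.ord) (hg : GoodPlay f ξ) :
    (limitExt hmu f ξ hξ hξμ hg).C ((limitExt hmu f ξ hξ hξμ hg).top) = topsSet f ξ := by
  show (if sSup (topsSet f ξ) = sSup (topsSet f ξ) then topsSet f ξ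
    else Cold f ξ (sSup (topsSet f ξ))) = topsSet f ξ
  rw [if_pos rfl]

lemma limitExt_BExt (hmu : ℵ₀ ≤ mu) {f : Ordinal → BCond mu kap} {ξ : Ordinal}
    (hξ : Order.IsSuccLimit ξ) (hξμ : ξ ≤ mu.ord) (hg : GoodPlay f ξ)
    {η : Ordinal} (h0 : 0 < η) (hη : η < ξ) :
    BExt (limitExt hmu f ξ hξ hξμ hg) (f η) := by
  refine ⟨?_, ?_, ?_⟩
  · intro α hα
    exact mem_insert_of_mem _ ⟨η, h0, hη, hα⟩
  · rintro α (rfl | ⟨η', h0', hη', hs'⟩) hle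
    · exact absurd hle (not_le.2 (top_lt_sSup hξ hg h0 hη))
    · rcases le_total η' η with h | h
      · exact mem_s_mono hg.1 h0' h hη hs'
      · rcases h.lt_or_eq with h | rfl
        · exact (hg.1 η η' h0 h hη').2.1 α hs' hle
        · exact hs'
  · intro α hα
    show (if α = sSup (topsSet f ξ) then topsSet f ξ else Cold f ξ α) = (f η).C α
    have hne : α ≠ sSup (topsSet f ξ) := (U_lt hξ hg ⟨η, h0, hη, hα⟩).ne
    rw [if_neg hne, Cold_eq hg.1 h0 hη hα]

end LimitExt


/-! ### The strategy -/

open Classical in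
def core (hmu : ℵ₀ ≤ mu) (f : Ordinal → BCond mu kap) (ξ : Ordinal) : BCond mu kap :=
  if h : Order.IsSuccLimit ξ ∧ ξ ≤ mu.ord ∧ GoodPlay f ξ then limitExt hmu f ξ h.1 h.2.1 h.2.2
  else succExt hmu (f (Ordinal.pred ξ))

def strat (hmu : ℵ₀ ≤ mu) (f : Ordinal → BCond mu kap) (ξ : Ordinal) : BCond mu kap :=
  core hmu (fun η => if η < ξ then f η else trivCond hmu) ξ

lemma strat_congr (hmu : ℵ₀ ≤ mu) {f g : Ordinal → BCond mu kap} {ξ : Ordinal}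
    (h : ∀ η < ξ, f η = g η) : strat hmu f ξ = strat hmu g ξ := by
  unfold strat
  congr 1
  funext η
  by_cases hη : η < ξ
  · rw [if_pos hη, if_pos hη, h η hη]
  · rw [if_neg hη, if_neg hη]

lemma follow_good (hmu : ℵ₀ ≤ mu) {f : Ordinal → BCond mu kap} {ξ : Ordinal}
    (hξ1 : ξ ≤ mu.ord + 1) (hd : Decr f ξ)
    (hf : ∀ η, 0 < η → η < ξ → EvenOrd η → f η = strat hmu f η) : GoodPlay f ξ := by
  suffices H : ∀ η, η ≤ ξ → GoodPlay f η from H ξ le_rfl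
  intro η
  induction η using Ordinal.induction with
  | _ η IH =>
    intro hηξ
    refine ⟨fun a b h0 hab hb => hd a b h0 hab (hb.trans_le hηξ), ?_, ?_⟩
    · -- successor even stages
      intro ζ hζ he
      have h2ξ : ζ + 2 < ξ := hζ.trans_le hηξ
      have h2pos : (0 : Ordinal) < ζ + 2 := (zero_le (a := ζ)).trans_lt (lt_add_two ζ)
      have hfe := hf (ζ + 2) h2pos h2ξ he
      rw [hfe]
      unfold strat core
      rw [dif_neg]
      · have hpred : Ordinal.pred (ζ + 2) = ζ + 1 := by
          rw [add_two_eq, Ordinal.pred_succ, Ordinal.add_one_eq_succ]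
        rw [hpred]
        beta_reduce
        rw [if_pos (add_one_lt_add_two ζ)]
        rfl
      · rintro ⟨hlim, -, -⟩
        rw [add_two_eq] at hlim
        exact Order.not_isSuccLimit_succ _ hlim
    · -- limit even stages
      intro η' h0 hη' hlim
      have hη'ξ : η' < ξ := hη'.trans_le hηξ
      have hfe := hf η' h0 hη'ξ (EvenOrd.of_isLimit hlim)
      have hgood : GoodPlay (fun ζ => if ζ < η' then f ζ else trivCond hmu) η' :=
        goodPlay_congr (fun ζ hζ => (if_pos hζ).symm) (IH η' hη' (hη'.le.trans hηξ))
      have hμ : η' ≤ mu.ord := by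
        have h1 : η' < mu.ord + 1 := hη'ξ.trans_le hξ1
        rwa [Ordinal.add_one_eq_succ, Order.lt_succ_iff] at h1
      have hts : topsSet (fun ζ => if ζ < η' then f ζ else trivCond hmu) η' =
          topsSet f η' := topsSet_congr fun ζ hζ => if_pos hζ
      have hstrat : strat hmu f η' =
          limitExt hmu (fun ζ => if ζ < η' then f ζ else trivCond hmu) η' hlim hμ hgood := by
        unfold strat core
        rw [dif_pos ⟨hlim, hμ, hgood⟩]
      constructor
      · rw [hfe, hstrat, limitExt_top, hts]
      · rw [hfe, hstrat, limitExt_C_top, hts]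

end Aux

/-- Proposition 8.6(2): for infinite cardinals `kap ≤ mu` with `kap` regular,
the poset `𝔹(mu, kap)` is `(mu + 1)`-strategically closed: Player II has a
winning strategy in the game `G_{mu+1}(𝔹(mu, kap))`. -/
theorem statement13 (mu kap : Cardinal.{0}) (hk : kap.IsRegular)
    (hmu : ℵ₀ ≤ mu) (hkm : kap ≤ mu) :
    StratClosed (BCond mu kap) BExt (mu.ord + 1) := by
  refine ⟨strat hmu, fun f g ξ h => strat_congr hmu h, ?_⟩
  intro f ξ h0 hξβ he hdec hfol η hη0 hηξ
  have hξμ1 : ξ ≤ mu.ord + 1 := hξβ.le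
  have hgood : GoodPlay f ξ := follow_good hmu hξμ1 hdec hfol
  have hgood' : GoodPlay (fun ζ => if ζ < ξ then f ζ else trivCond hmu) ξ :=
    goodPlay_congr (fun ζ hζ => (if_pos hζ).symm) hgood
  rcases he.succ_or_limit h0.ne' with hlim | ⟨ζ, rfl⟩
  · -- limit stage
    have hξμ : ξ ≤ mu.ord := by
      rwa [Ordinal.add_one_eq_succ, Order.lt_succ_iff] at hξβ
    have hstrat : strat hmu f ξ =
        limitExt hmu (fun ζ => if ζ < ξ then f ζ else trivCond hmu) ξ hlim hξμ hgood' := by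
      unfold strat core
      rw [dif_pos ⟨hlim, hξμ, hgood'⟩]
    rw [hstrat]
    have hb := limitExt_BExt hmu hlim hξμ hgood' hη0 hηξ
    rwa [if_pos hηξ] at hb
  · -- successor stage
    have hnl : ¬(Order.IsSuccLimit (ζ + 2) ∧ ζ + 2 ≤ mu.ord ∧
        GoodPlay (fun η => if η < ζ + 2 then f η else trivCond hmu) (ζ + 2)) := by
      rintro ⟨hlim, -, -⟩
      rw [add_two_eq] at hlim
      exact Order.not_isSuccLimit_succ _ hlim
    have hstrat : strat hmu f (ζ + 2) = succExt hmu (f (ζ + 1)) := by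
      unfold strat core
      rw [dif_neg hnl]
      have hpred : Ordinal.pred (ζ + 2) = ζ + 1 := by
        rw [add_two_eq, Ordinal.pred_succ, Ordinal.add_one_eq_succ]
      rw [hpred]
      beta_reduce
      rw [if_pos (add_one_lt_add_two ζ)]
    rw [hstrat]
    have hbase : BExt (succExt hmu (f (ζ + 1))) (f (ζ + 1)) := succExt_BExt hmu _
    have hle : η ≤ ζ + 1 := by
      rw [add_two_eq] at hηξ
      rw [Ordinal.add_one_eq_succ]
      exact Order.lt_succ_iff.1 hηξ
    rcases hle.lt_or_eq with h | rfl
    · exact BExt_trans hbase (hdec η (ζ + 1) hη0 h (add_one_lt_add_two ζ))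
    · exact hbase

end Paper
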